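/- Assume the delay equation x'(t) = Σ_{j=0}^N A_j(t) x(t−r_j) is asymptotically hyperbolic and that Λ_L : W^{1,p}_μ → L^p_μ is bijective. Let P(s) : C → C be the projection onto E(s) along F(s) coming from the splitting C = E(s) ⊕ F(s). Set β = sup_{t∈ℝ} ‖L(t)‖ (operator norm C → ℝⁿ) and let c be a constant such that sup_{t∈ℝ}|(Λ_L⁻¹ h)(t)| ≤ c · sup_{t∈ℝ}|h(t)| for every bounded measurable h. Then the operator norm of P(s) satisfies ‖P(s)‖ ≤ γ₀ := cβ + 1 for every s ∈ ℝ. -/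

import Mathlib

open MeasureTheory Filter Topology Set
open scoped ENNReal

noncomputable section

/-- The weighted measure `dμ = (1+t²)⁻¹ dt` on `ℝ`. -/
def muW : Measure ℝ := volume.withDensity fun t => ENNReal.ofReal ((1 + t ^ 2)⁻¹)

/-- Weighted `L^p` norm; for `p = ∞` it is the essential supremum of `‖f t‖ (1+t²)⁻¹`,
as in the paper. -/
def lpNormW {E : Type*} [NormedAddCommGroup E] (p : ℝ≥0∞) (f : ℝ → E) : ℝ≥0∞ :=
  if p = ∞ then essSup (fun t => (‖f t‖₊ : ℝ≥0∞) * ENNReal.ofReal ((1 + t ^ 2)⁻¹)) volume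
  else (∫⁻ t, (‖f t‖₊ : ℝ≥0∞) ^ p.toReal ∂muW) ^ (1 / p.toReal)

/-- Membership in the weighted space `L^p_μ`. -/
def MemLpW {E : Type*} [NormedAddCommGroup E] (p : ℝ≥0∞) (f : ℝ → E) : Prop :=
  AEStronglyMeasurable f volume ∧ lpNormW p f < ⊤

/-- `x` is locally absolutely continuous with (locally integrable) derivative `g`. -/
def HasACDeriv {E : Type*} [NormedAddCommGroup E] [NormedSpace ℝ E] (x g : ℝ → E) : Prop :=
  (∀ a b : ℝ, IntervalIntegrable g volume a b) ∧
  ∀ a t : ℝ, x t = x a + ∫ s in a..t, g s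

/-- Membership in the weighted Sobolev space `W^{1,p}_μ`. -/
def MemW1pW {E : Type*} [NormedAddCommGroup E] [NormedSpace ℝ E] (p : ℝ≥0∞) (x : ℝ → E) : Prop :=
  MemLpW p x ∧ ∃ g, HasACDeriv x g ∧ MemLpW p g

/-- The delays satisfy `0 = r₀ < r₁ < ⋯ < r_N`. -/
def DelaysOK {N : ℕ} (r : Fin (N + 1) → ℝ) : Prop := r 0 = 0 ∧ StrictMono r

/-- The coefficient matrices are measurable and uniformly bounded on `ℝ`. -/
def CoeffOK {n N : ℕ} (A : Fin (N + 1) → ℝ → Matrix (Fin n) (Fin n) ℝ) : Prop :=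
  (∀ j i k, Measurable fun t => A j t i k) ∧
  ∃ β : ℝ, ∀ (j : Fin (N + 1)) (t : ℝ) (v : Fin n → ℝ), ‖(A j t).mulVec v‖ ≤ β * ‖v‖

/-- Hyperbolicity of the autonomous system `x' = Σ A₀ⱼ x(·−rⱼ)`:
`det Δ(iz) ≠ 0` for all real `z`, where `Δ(s) = sI − Σ A₀ⱼ e^{−s rⱼ}`. -/
def IsHyperbolic {n N : ℕ} (r : Fin (N + 1) → ℝ)
    (A0 : Fin (N + 1) → Matrix (Fin n) (Fin n) ℝ) : Prop :=
  ∀ z : ℝ,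
    ((Complex.I * z) • (1 : Matrix (Fin n) (Fin n) ℂ)
      - ∑ j, Complex.exp (-(Complex.I * z) * (r j)) • (A0 j).map (fun a => (a : ℂ))).det ≠ 0

/-- The equation `x' = Σ Aⱼ(t) x(·−rⱼ)` is asymptotically hyperbolic. -/
def AsympHyperbolic {n N : ℕ} (r : Fin (N + 1) → ℝ)
    (A : Fin (N + 1) → ℝ → Matrix (Fin n) (Fin n) ℝ) : Prop :=
  ∃ Ap Am : Fin (N + 1) → Matrix (Fin n) (Fin n) ℝ,
    (∀ j i k, Tendsto (fun t => A j t i k) atTop (𝓝 (Ap j i k))) ∧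
    (∀ j i k, Tendsto (fun t => A j t i k) atBot (𝓝 (Am j i k))) ∧
    IsHyperbolic r Ap ∧ IsHyperbolic r Am

/-- `Λ_L x = h`, i.e. `x` is locally absolutely continuous with
`x'(t) = Σ Aⱼ(t) x(t−rⱼ) + h(t)` a.e. -/
def SolvesNH {n N : ℕ} (r : Fin (N + 1) → ℝ)
    (A : Fin (N + 1) → ℝ → Matrix (Fin n) (Fin n) ℝ) (x h : ℝ → Fin n → ℝ) : Prop :=
  HasACDeriv x fun t => (∑ j, (A j t).mulVec (x (t - r j))) + h t

/-- `x` is a solution of `x'(t) = Σ Aⱼ(t)x(t−rⱼ)` on `[s,∞)` (with history on `[s−r_N, s]`). -/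
def IsSolFrom {n N : ℕ} (r : Fin (N + 1) → ℝ)
    (A : Fin (N + 1) → ℝ → Matrix (Fin n) (Fin n) ℝ) (x : ℝ → Fin n → ℝ) (s : ℝ) : Prop :=
  ContinuousOn x (Ici (s - r (Fin.last N))) ∧
  (∀ t₁ t₂, s ≤ t₁ → s ≤ t₂ →
    IntervalIntegrable (fun τ => ∑ j, (A j τ).mulVec (x (τ - r j))) volume t₁ t₂) ∧
  ∀ t, s ≤ t → x t = x s + ∫ τ in s..t, ∑ j, (A j τ).mulVec (x (τ - r j))

/-- `v` is a solution of the equation on `(−∞, s]` (a backward continuation). -/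
def IsSolUpTo {n N : ℕ} (r : Fin (N + 1) → ℝ)
    (A : Fin (N + 1) → ℝ → Matrix (Fin n) (Fin n) ℝ) (v : ℝ → Fin n → ℝ) (s : ℝ) : Prop :=
  ContinuousOn v (Iic s) ∧
  (∀ t₁ t₂, t₁ ≤ s → t₂ ≤ s →
    IntervalIntegrable (fun τ => ∑ j, (A j τ).mulVec (v (τ - r j))) volume t₁ t₂) ∧
  ∀ τ t, τ ≤ t → t ≤ s → v t = v τ + ∫ σ in τ..t, ∑ j, (A j σ).mulVec (v (σ - r j))

/-- `xₛ = φ`: the segment of `x` at time `s` equals `φ ∈ C = C([−r_N,0],ℝⁿ)`. -/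
def Matches {n N : ℕ} (r : Fin (N + 1) → ℝ) (x : ℝ → Fin n → ℝ) (s : ℝ)
    (φ : C(Set.Icc (-(r (Fin.last N))) (0 : ℝ), Fin n → ℝ)) : Prop :=
  ∀ θ : Set.Icc (-(r (Fin.last N))) (0 : ℝ), x (s + (θ : ℝ)) = φ θ

/-- `E(s)`: initial data whose forward solution is bounded, i.e. `sup_{t ≥ s} ‖T(t,s)φ‖ < ∞`. -/
def Eset {n N : ℕ} (r : Fin (N + 1) → ℝ)
    (A : Fin (N + 1) → ℝ → Matrix (Fin n) (Fin n) ℝ) (s : ℝ) :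
    Set (C(Set.Icc (-(r (Fin.last N))) (0 : ℝ), Fin n → ℝ)) :=
  {φ | ∃ x, IsSolFrom r A x s ∧ Matches r x s φ ∧
      ∃ M, ∀ t, s - r (Fin.last N) ≤ t → ‖x t‖ ≤ M}

/-- `F(s)`: initial data with a bounded backward continuation `v` with `vₜ = T(t,τ)v_τ`. -/
def Fset {n N : ℕ} (r : Fin (N + 1) → ℝ)
    (A : Fin (N + 1) → ℝ → Matrix (Fin n) (Fin n) ℝ) (s : ℝ) :
    Set (C(Set.Icc (-(r (Fin.last N))) (0 : ℝ), Fin n → ℝ)) :=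
  {φ | ∃ v, IsSolUpTo r A v s ∧ Matches r v s φ ∧ ∃ M, ∀ t, t ≤ s → ‖v t‖ ≤ M}

/-! The bounded forward solution `x` from `φE` and the bounded backward solution `w` from `φF`
are glued into one bounded function `u`, equal to `w` up to time `s` and to `φ(0) - x` after it.
Then `Λ_L u` vanishes before `s` and equals `-L(t)(xₜ + uₜ)` after it, where `xₜ + uₜ` is a
piece of `φ` or the constant `φ(0)`; so `‖Λ_L u‖ ≤ β‖φ‖`, hence `‖u‖ ≤ cβ‖φ‖`, and
`φF = uₛ`, `φE = φ - φF` give the bound. -/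

instance : IsFiniteMeasure muW where
  measure_univ_lt_top := by
    rw [muW, withDensity_apply _ MeasurableSet.univ, Measure.restrict_univ]
    refine lt_of_eq_of_lt (lintegral_congr fun t => ?_) integrable_inv_one_add_sq.2
    rw [← Real.enorm_eq_ofReal (by positivity)]

lemma memLpW_of_norm_le {E : Type*} [NormedAddCommGroup E] (p : ℝ≥0∞) {f : ℝ → E}
    (hf : AEStronglyMeasurable f volume) {M : ℝ} (hM : ∀ t, ‖f t‖ ≤ M) : MemLpW p f := by
  have hfM : ∀ t, (‖f t‖₊ : ℝ≥0∞) ≤ ENNReal.ofReal M := fun t => by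
    rw [← enorm_eq_nnnorm, ← ofReal_norm]
    exact ENNReal.ofReal_le_ofReal (hM t)
  refine ⟨hf, ?_⟩
  unfold lpNormW
  split_ifs
  · refine (essSup_le_of_ae_le (ENNReal.ofReal M) (.of_forall fun t => ?_)).trans_lt
      ENNReal.ofReal_lt_top
    have hweight : ENNReal.ofReal ((1 + t ^ 2)⁻¹) ≤ 1 :=
      ENNReal.ofReal_le_one.2 (inv_le_one_of_one_le₀ (by nlinarith))
    simpa using mul_le_mul' (hfM t) hweight
  · refine ENNReal.rpow_lt_top_of_nonneg (by positivity) (ne_top_of_le_ne_top ?_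
      (lintegral_mono fun t => ENNReal.rpow_le_rpow (hfM t) ENNReal.toReal_nonneg))
    rw [lintegral_const]
    exact ENNReal.mul_ne_top
      (ENNReal.rpow_ne_top_of_nonneg ENNReal.toReal_nonneg ENNReal.ofReal_ne_top)
      (measure_ne_top _ _)

lemma intervalIntegrable_of_norm_le {E : Type*} [NormedAddCommGroup E] {f : ℝ → E}
    (hf : AEStronglyMeasurable f volume) {M : ℝ} (hM : ∀ t, ‖f t‖ ≤ M) (a b : ℝ) :
    IntervalIntegrable f volume a b := by
  rw [intervalIntegrable_iff]
  refine Measure.integrableOn_of_bounded ?_ hf (.of_forall hM)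
  rw [uIoc, Real.volume_Ioc]
  exact ENNReal.ofReal_ne_top

lemma hasACDeriv_of_eq_add_integral {E : Type*} [NormedAddCommGroup E] [NormedSpace ℝ E]
    {u g : ℝ → E} (hg : ∀ a b, IntervalIntegrable g volume a b) (s : ℝ)
    (hu : ∀ t, u t = u s + ∫ σ in s..t, g σ) : HasACDeriv u g := by
  refine ⟨hg, fun a t => ?_⟩
  rw [hu t, hu a, add_assoc, ← intervalIntegral.integral_add_adjacent_intervals (hg a s) (hg s t),
    intervalIntegral.integral_symm s a]
  abel

section Glue

variable {E : Type*} [NormedAddCommGroup E] {x w : ℝ → E} {s t : ℝ} {a : E}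

/-- The `min`/`max` form makes continuity immediate. -/
def glue (x w : ℝ → E) (s : ℝ) (a : E) (t : ℝ) : E :=
  w (min t s) - w s - x (max t s) + a

lemma glue_of_le (ha : x s + w s = a) (ht : t ≤ s) : glue x w s a t = w t := by
  rw [glue, min_eq_left ht, max_eq_right ht, ← ha]
  abel

lemma glue_of_ge (ht : s ≤ t) : glue x w s a t = a - x t := by
  rw [glue, min_eq_right ht, max_eq_left ht]
  abel

lemma continuous_glue (hx : ContinuousOn x (Ici s)) (hw : ContinuousOn w (Iic s)) :
    Continuous (glue x w s a) :=
  (((hw.comp_continuous (continuous_id.min continuous_const) fun t => min_le_right t s).sub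
    continuous_const).sub (hx.comp_continuous (continuous_id.max continuous_const)
    fun t => le_max_right t s)).add continuous_const

lemma norm_glue_le {Mx Mw : ℝ} (hx : ∀ t, s ≤ t → ‖x t‖ ≤ Mx) (hw : ∀ t, t ≤ s → ‖w t‖ ≤ Mw)
    (t : ℝ) : ‖glue x w s a t‖ ≤ Mw + Mw + Mx + ‖a‖ := by
  have h₁ := hw _ (min_le_right t s)
  have h₂ := hw s le_rfl
  have h₃ := hx _ (le_max_right t s)
  have h₄ := norm_add_le (w (min t s) - w s - x (max t s)) a
  have h₅ := norm_sub_le (w (min t s) - w s) (x (max t s))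
  have h₆ := norm_sub_le (w (min t s)) (w s)
  rw [glue]
  linarith

end Glue

lemma DelaysOK.nonneg {N : ℕ} {r : Fin (N + 1) → ℝ} (hr : DelaysOK r) (j : Fin (N + 1)) :
    0 ≤ r j :=
  hr.1 ▸ hr.2.monotone (Fin.zero_le j)

lemma DelaysOK.le_last {N : ℕ} {r : Fin (N + 1) → ℝ} (hr : DelaysOK r) (j : Fin (N + 1)) :
    r j ≤ r (Fin.last N) :=
  hr.2.monotone (Fin.le_last j)

section Delay

variable {n N : ℕ} {r : Fin (N + 1) → ℝ} {A : Fin (N + 1) → ℝ → Matrix (Fin n) (Fin n) ℝ}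
  {s t : ℝ}

/-- `t ↦ L(t) yₜ`. -/
def delaySum (r : Fin (N + 1) → ℝ) (A : Fin (N + 1) → ℝ → Matrix (Fin n) (Fin n) ℝ)
    (y : ℝ → Fin n → ℝ) (t : ℝ) : Fin n → ℝ :=
  ∑ j, (A j t).mulVec (y (t - r j))

lemma delaySum_add (y z : ℝ → Fin n → ℝ) :
    delaySum r A (y + z) = delaySum r A y + delaySum r A z := by
  ext1 t
  simp only [delaySum, Pi.add_apply, Matrix.mulVec_add, Finset.sum_add_distrib]

lemma delaySum_congr {y z : ℝ → Fin n → ℝ} (h : ∀ j, y (t - r j) = z (t - r j)) :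
    delaySum r A y t = delaySum r A z t :=
  Finset.sum_congr rfl fun j _ => by rw [h j]

lemma measurable_delaySum (hA : ∀ j i k, Measurable fun t => A j t i k) {y : ℝ → Fin n → ℝ}
    (hy : Continuous y) : Measurable (delaySum r A y) := by
  refine Finset.measurable_sum _ fun j _ => measurable_pi_lambda _ fun i => ?_
  simp only [Matrix.mulVec, dotProduct]
  exact Finset.measurable_sum _ fun k _ =>
    (hA j i k).mul ((continuous_apply k).comp (hy.comp (continuous_sub_right _))).measurable

lemma Matches.eq_of_mem {x : ℝ → Fin n → ℝ} {φ : C(Icc (-(r (Fin.last N))) (0 : ℝ), Fin n → ℝ)}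
    (hx : Matches r x s φ) (ht : t - s ∈ Icc (-(r (Fin.last N))) 0) : x t = φ ⟨t - s, ht⟩ := by
  simpa using hx ⟨t - s, ht⟩

lemma Matches.norm_le {x : ℝ → Fin n → ℝ} {φ : C(Icc (-(r (Fin.last N))) (0 : ℝ), Fin n → ℝ)}
    (hx : Matches r x s φ) {K : ℝ} (hK : ∀ t, ‖x t‖ ≤ K) : ‖φ‖ ≤ K :=
  (ContinuousMap.norm_le _ ((norm_nonneg _).trans (hK 0))).2 fun θ => hx θ ▸ hK _

/-- `Λ_L u` for the glued `u`; `x` is frozen below `s - r_N` (where it need not be continuous)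
only to keep the term measurable. -/
def glueForcing (r : Fin (N + 1) → ℝ) (A : Fin (N + 1) → ℝ → Matrix (Fin n) (Fin n) ℝ)
    (s : ℝ) (x u : ℝ → Fin n → ℝ) (t : ℝ) : Fin n → ℝ :=
  if t ≤ s then 0 else -delaySum r A (fun τ => x (max τ (s - r (Fin.last N))) + u τ) t

variable {x w : ℝ → Fin n → ℝ} {a : Fin n → ℝ}

lemma measurable_glueForcing (hA : ∀ j i k, Measurable fun t => A j t i k)
    (hx : ContinuousOn x (Ici (s - r (Fin.last N)))) {u : ℝ → Fin n → ℝ} (hu : Continuous u) :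
    Measurable (glueForcing r A s x u) :=
  Measurable.ite measurableSet_Iic measurable_const (measurable_delaySum hA
    ((hx.comp_continuous (continuous_id.max continuous_const) fun _ =>
      mem_Ici.2 (le_max_right _ _)).add hu)).neg

lemma norm_glueForcing_le (hr : DelaysOK r) {β M : ℝ} (hM : 0 ≤ M)
    (hβ : ∀ (t : ℝ) (v : Fin (N + 1) → Fin n → ℝ) (M : ℝ), (∀ j, ‖v j‖ ≤ M) →
      ‖∑ j, (A j t).mulVec (v j)‖ ≤ β * M)
    {u : ℝ → Fin n → ℝ} (hxu : ∀ τ, s - r (Fin.last N) ≤ τ → ‖x τ + u τ‖ ≤ M) (t : ℝ) :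
    ‖glueForcing r A s x u t‖ ≤ β * M := by
  unfold glueForcing
  split_ifs with ht
  · simpa using hβ t 0 M fun j => by simpa using hM
  · have hR : ∀ j, s - r (Fin.last N) ≤ t - r j := fun j => by
      linarith [hr.le_last j, not_le.1 ht]
    rw [norm_neg]
    refine hβ t _ M fun j => ?_
    dsimp only
    rw [max_eq_left (hR j)]
    exact hxu _ (hR j)

lemma delaySum_glue_add_glueForcing_of_le (hr : DelaysOK r) (ha : x s + w s = a) (ht : t ≤ s) :
    delaySum r A (glue x w s a) t + glueForcing r A s x (glue x w s a) t = delaySum r A w t := by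
  rw [glueForcing, if_pos ht, add_zero]
  exact delaySum_congr fun j => glue_of_le ha (by linarith [hr.nonneg j])

lemma delaySum_add_glueForcing_of_lt (hr : DelaysOK r) {u : ℝ → Fin n → ℝ} (ht : s < t) :
    delaySum r A u t + glueForcing r A s x u t = -delaySum r A x t := by
  have hx : delaySum r A (fun τ => x (max τ (s - r (Fin.last N)))) t = delaySum r A x t :=
    delaySum_congr fun j => by rw [max_eq_left (by linarith [hr.le_last j])]
  rw [glueForcing, if_neg (not_le.2 ht), ← Pi.add_def, delaySum_add, Pi.add_apply, hx]
  abel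

lemma solvesNH_glue (hr : DelaysOK r) (hx : IsSolFrom r A x s) (hw : IsSolUpTo r A w s)
    (ha : x s + w s = a)
    (hint : ∀ t₁ t₂, IntervalIntegrable (fun t => delaySum r A (glue x w s a) t +
      glueForcing r A s x (glue x w s a) t) volume t₁ t₂) :
    SolvesNH r A (glue x w s a) (glueForcing r A s x (glue x w s a)) := by
  show HasACDeriv _ fun t => delaySum r A (glue x w s a) t + glueForcing r A s x (glue x w s a) t
  refine hasACDeriv_of_eq_add_integral hint s fun t => ?_
  rcases le_total t s with ht | ht
  · have hw' : w s = w t + ∫ σ in t..s, delaySum r A w σ := hw.2.2 t s ht le_rfl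
    rw [glue_of_le ha ht, glue_of_le ha le_rfl, intervalIntegral.integral_symm,
      intervalIntegral.integral_congr fun σ hσ =>
        delaySum_glue_add_glueForcing_of_le hr ha (uIcc_of_le ht ▸ hσ).2, hw']
    abel
  · have hx' : x t = x s + ∫ σ in s..t, delaySum r A x σ := hx.2.2 t ht
    rw [glue_of_ge ht, glue_of_ge le_rfl, intervalIntegral.integral_congr_ae
      (.of_forall fun σ hσ => delaySum_add_glueForcing_of_lt hr (uIoc_of_le ht ▸ hσ).1),
      intervalIntegral.integral_neg, hx']
    abel

lemma Matches.glue {φ : C(Icc (-(r (Fin.last N))) (0 : ℝ), Fin n → ℝ)} (hw : Matches r w s φ) (ha : x s + w s = a) :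
    Matches r (glue x w s a) s φ :=
  fun θ => (glue_of_le ha (by linarith [θ.2.2])).trans (hw θ)

lemma norm_add_glue_le {φE φF : C(Icc (-(r (Fin.last N))) (0 : ℝ), Fin n → ℝ)}
    (hx : Matches r x s φE) (hw : Matches r w s φF) (ha : x s + w s = a)
    (haφ : ‖a‖ ≤ ‖φE + φF‖) {τ : ℝ} (hτ : s - r (Fin.last N) ≤ τ) :
    ‖x τ + glue x w s a τ‖ ≤ ‖φE + φF‖ := by
  rcases le_total τ s with hτs | hτs
  · have hmem : τ - s ∈ Icc (-(r (Fin.last N))) 0 := ⟨by linarith, by linarith⟩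
    rw [glue_of_le ha hτs, hx.eq_of_mem hmem, hw.eq_of_mem hmem]
    exact (φE + φF).norm_coe_le_norm _
  · rwa [glue_of_ge hτs, add_sub_cancel]

end Delay

theorem projection_bound_general {n N : ℕ}
    (r : Fin (N + 1) → ℝ) (A : Fin (N + 1) → ℝ → Matrix (Fin n) (Fin n) ℝ)
    (hr : DelaysOK r) (hA : CoeffOK A)
    (p : ℝ≥0∞)
    (β c : ℝ)
    -- `β = sup_t ‖L(t)‖`
    (hβ : ∀ (t : ℝ) (v : Fin (N + 1) → Fin n → ℝ) (M : ℝ), (∀ j, ‖v j‖ ≤ M) →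
      ‖∑ j, (A j t).mulVec (v j)‖ ≤ β * M)
    -- `sup_t |(Λ_L⁻¹ h)(t)| ≤ c · sup_t |h(t)|` for bounded measurable `h`
    (hc : ∀ (x h : ℝ → Fin n → ℝ) (M : ℝ), MemW1pW p x → SolvesNH r A x h →
      (∀ t, ‖h t‖ ≤ M) → ∀ t, ‖x t‖ ≤ c * M) :
    ∀ (s : ℝ) (φ φE φF : C(Set.Icc (-(r (Fin.last N))) (0 : ℝ), Fin n → ℝ)),
      φE ∈ Eset r A s → φF ∈ Fset r A s → φ = φE + φF →
      ‖φE‖ ≤ (c * β + 1) * ‖φ‖ := by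
  rintro s _ φE φF ⟨x, hx, hxφ, Mx, hMx⟩ ⟨w, hw, hwφ, Mw, hMw⟩ rfl
  have hR := hr.nonneg (Fin.last N)
  have h0 : (0 : ℝ) ∈ Icc (-(r (Fin.last N))) 0 := ⟨by linarith, le_rfl⟩
  set a := (φE + φF) ⟨0, h0⟩
  have ha : x s + w s = a := by
    rw [← add_zero s]
    exact congr_arg₂ (· + ·) (hxφ ⟨0, h0⟩) (hwφ ⟨0, h0⟩)
  set u := glue x w s a
  set h := glueForcing r A s x u
  have hu : Continuous u := continuous_glue (hx.1.mono (Ici_subset_Ici.2 (by linarith))) hw.1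
  have hu_le := norm_glue_le (a := a) (fun t ht => hMx t (by linarith)) hMw
  have hh_le : ∀ t, ‖h t‖ ≤ β * ‖φE + φF‖ := norm_glueForcing_le hr (norm_nonneg _) hβ
    fun τ hτ => norm_add_glue_le hxφ hwφ ha ((φE + φF).norm_coe_le_norm _) hτ
  have hg : AEStronglyMeasurable (fun t => delaySum r A u t + h t) volume :=
    ((measurable_delaySum hA.1 hu).add (measurable_glueForcing hA.1 hx.1 hu)).aestronglyMeasurable
  have hg_le (t : ℝ) : ‖delaySum r A u t + h t‖ ≤ β * (Mw + Mw + Mx + ‖a‖) + β * ‖φE + φF‖ :=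
    (norm_add_le _ _).trans (add_le_add (hβ _ _ _ fun _ => hu_le _) (hh_le t))
  have hsol : SolvesNH r A u h := solvesNH_glue hr hx hw ha (intervalIntegrable_of_norm_le hg hg_le)
  have huW : MemW1pW p u :=
    ⟨memLpW_of_norm_le p hu.aestronglyMeasurable hu_le, _, hsol, memLpW_of_norm_le p hg hg_le⟩
  have hφF : ‖φF‖ ≤ c * (β * ‖φE + φF‖) := (hwφ.glue ha).norm_le (hc u h _ huW hsol hh_le)
  calc ‖φE‖ = ‖φE + φF - φF‖ := by rw [add_sub_cancel_right]
    _ ≤ ‖φE + φF‖ + ‖φF‖ := norm_sub_le _ _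
    _ ≤ (c * β + 1) * ‖φE + φF‖ := by linarith

/-- The projections `P(s)` of the splitting `C = E(s) ⊕ F(s)` satisfy the
uniform bound `‖P(s)‖ ≤ γ₀ = cβ + 1`. -/
theorem projection_bound {n N : ℕ} (hn : 1 ≤ n)
    (r : Fin (N + 1) → ℝ) (A : Fin (N + 1) → ℝ → Matrix (Fin n) (Fin n) ℝ)
    (hr : DelaysOK r) (hA : CoeffOK A) (hAH : AsympHyperbolic r A)
    (p : ℝ≥0∞) (hp : 1 ≤ p)
    (hinj : ∀ x : ℝ → Fin n → ℝ, MemW1pW p x → SolvesNH r A x 0 → x = 0)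
    (hsurj : ∀ h : ℝ → Fin n → ℝ, MemLpW p h → ∃ x, MemW1pW p x ∧ SolvesNH r A x h)
    (β c : ℝ)
    -- `β = sup_t ‖L(t)‖`
    (hβ : ∀ (t : ℝ) (v : Fin (N + 1) → Fin n → ℝ) (M : ℝ), (∀ j, ‖v j‖ ≤ M) →
      ‖∑ j, (A j t).mulVec (v j)‖ ≤ β * M)
    -- `sup_t |(Λ_L⁻¹ h)(t)| ≤ c · sup_t |h(t)|` for bounded measurable `h`
    (hc : ∀ (x h : ℝ → Fin n → ℝ) (M : ℝ), MemW1pW p x → SolvesNH r A x h →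
      (∀ t, ‖h t‖ ≤ M) → ∀ t, ‖x t‖ ≤ c * M) :
    ∀ (s : ℝ) (φ φE φF : C(Set.Icc (-(r (Fin.last N))) (0 : ℝ), Fin n → ℝ)),
      φE ∈ Eset r A s → φF ∈ Fset r A s → φ = φE + φF →
      ‖φE‖ ≤ (c * β + 1) * ‖φ‖ :=
  projection_bound_general r A hr hA p β c hβ hc
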